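/- arXiv:2310.07227 — 9 statements merged into one kernel-verified Lean document; each statement's English description precedes it below -/
import Mathlib

section
/- Every orientation of an ordered cycle of odd length is directable: some set of vertices can be pushed so that the resulting orientation is a directed cycle (all arcs forward, or all arcs backward, with respect to the given cyclic traversal). -/
/-!
Pushing `S` with indicator `s` adds the coboundary `i ↦ s i ^^ s (i + 1)` to the edge vector. On a
cycle the coboundaries are exactly the edge vectors of even total parity: integrate along the cycle
by prefix xors. Reversing every arc of a cycle of odd length flips the total parity, so either `o` or
its reversal differs from the all-forward orientation by a coboundary.
-/

open Fin.NatCast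

section
variable {n : ℕ}

def partialXor (f : Fin (n + 1) → Bool) : ℕ → Bool
  | 0 => false
  | m + 1 => partialXor f m ^^ f m

theorem partialXor_xor_const (f : Fin (n + 1) → Bool) (c : Bool) (m : ℕ) :
    partialXor (fun i => f i ^^ c) m = (partialXor f m ^^ (c && decide (Odd m))) := by
  induction m with
  | zero => simp [partialXor]
  | succ m ih =>
    simp only [partialXor, ih, Nat.odd_add_one, decide_not]
    cases c <;> cases decide (Odd m) <;> simp

theorem exists_xor_add_one_eq_of_partialXor_eq_false (f : Fin (n + 1) → Bool)
    (hf : partialXor f (n + 1) = false) :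
    ∃ s : Fin (n + 1) → Bool, ∀ i, (s i ^^ s (i + 1)) = f i := by
  refine ⟨fun i => partialXor f i, fun i => ?_⟩
  simp only [Fin.val_add_one]
  split_ifs with hi
  · subst hi
    rw [partialXor, Fin.natCast_eq_last] at hf
    simpa [partialXor] using hf
  · simp [partialXor]

theorem exists_xor_add_one_eq_const (hn : Odd (n + 1)) (o : Fin (n + 1) → Bool) :
    ∃ (s : Fin (n + 1) → Bool) (c : Bool), ∀ i, (o i ^^ (s i ^^ s (i + 1))) = c := by
  set c := partialXor o (n + 1)
  obtain ⟨s, hs⟩ := exists_xor_add_one_eq_of_partialXor_eq_false (fun i => o i ^^ c)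
    (by simp [partialXor_xor_const, hn, c])
  exact ⟨s, c, fun i => by simp [hs]⟩

end

open Fin.NatCast in
/-- `o i = true` iff the arc between `vᵢ` and `vᵢ₊₁` is the forward arc `vᵢ → vᵢ₊₁`, and
`s` is the indicator of the pushed set. -/
theorem stmt5_general (k : ℕ) (o : Fin (2 * k + 1) → Bool) :
    ∃ s : Fin (2 * k + 1) → Bool,
      (∀ i, Bool.xor (o i) (Bool.xor (s i) (s (i + 1))) = true) ∨
      (∀ i, Bool.xor (o i) (Bool.xor (s i) (s (i + 1))) = false) := by
  obtain ⟨s, c, hs⟩ := exists_xor_add_one_eq_const (odd_two_mul_add_one k) o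
  refine ⟨s, ?_⟩
  cases c
  · exact .inr hs
  · exact .inl hs

/-- An orientation of the ordered cycle `v₀v₁⋯v_{2k}v₀` is encoded by `o : Fin (2k+1) → Bool`:
`o i = true` iff the arc between `vᵢ` and `vᵢ₊₁` is the forward arc `vᵢ → vᵢ₊₁`.
Pushing the vertex set `{vᵢ | s i = true}` changes the bit of edge `i` by
`xor (s i) (s (i+1))`. Every orientation of an odd ordered cycle is directable:
some push makes all arcs forward, or all arcs backward. -/
theorem stmt5 (k : ℕ) (hk : 1 ≤ k) (o : Fin (2 * k + 1) → Bool) :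
    ∃ s : Fin (2 * k + 1) → Bool,
      (∀ i, Bool.xor (o i) (Bool.xor (s i) (s (i + 1))) = true) ∨
      (∀ i, Bool.xor (o i) (Bool.xor (s i) (s (i + 1))) = false) :=
  stmt5_general k o
end

section
/- An orientation of an ordered odd cycle cannot be both forward directable and backward directable: if pushing some vertex set makes all arcs forward, then no pushing of a vertex set makes all arcs backward. -/
/-- An orientation of the ordered odd cycle `v₀v₁⋯v_{2k}v₀` is encoded by
`o : Fin (2k+1) → Bool`: `o i = true` iff the arc between `vᵢ` and `vᵢ₊₁` is the forward
arc `vᵢ → vᵢ₊₁`. Pushing the set `{vᵢ | s i = true}` changes bit `i` by `xor (s i) (s (i+1))`.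
If some push makes all arcs forward, then no push makes all arcs backward. -/
theorem stmt6 (k : ℕ) (hk : 1 ≤ k) (o : Fin (2 * k + 1) → Bool)
    (h : ∃ s : Fin (2 * k + 1) → Bool,
        ∀ i, Bool.xor (o i) (Bool.xor (s i) (s (i + 1))) = true) :
    ¬ ∃ s : Fin (2 * k + 1) → Bool,
        ∀ i, Bool.xor (o i) (Bool.xor (s i) (s (i + 1))) = false := by
  rintro ⟨t, ht⟩
  obtain ⟨s, hs⟩ := h
  -- u i = s i ^^ t i satisfies u i ^^ u (i+1) = true for all i
  set u : Fin (2 * k + 1) → Bool := fun i => Bool.xor (s i) (t i) with hu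
  have key : ∀ i, Bool.xor (u i) (u (i + 1)) = true := by
    intro i
    have h1 := hs i
    have h2 := ht i
    simp only [hu]
    revert h1 h2
    cases o i <;> cases s i <;> cases t i <;> cases s (i+1) <;> cases t (i+1) <;> simp
  -- pass to ZMod 2
  set f : Fin (2 * k + 1) → ZMod 2 := fun i => if u i then 1 else 0 with hf
  have key2 : ∀ i, f i + f (i + 1) = 1 := by
    intro i
    have := key i
    simp only [hf]
    cases hui : u i <;> cases huj : u (i+1) <;> simp [hui, huj] at this ⊢ <;> decide
  have hsum : ∑ i : Fin (2 * k + 1), (f i + f (i + 1)) = (2 * k + 1 : ℕ) := by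
    rw [Finset.sum_congr rfl (fun i _ => key2 i)]
    simp [Finset.card_univ]
  have hsum2 : ∑ i : Fin (2 * k + 1), (f i + f (i + 1)) = 0 := by
    rw [Finset.sum_add_distrib]
    have : ∑ i : Fin (2 * k + 1), f (i + 1) = ∑ i : Fin (2 * k + 1), f i :=
      Fintype.sum_equiv (Equiv.addRight (1 : Fin (2 * k + 1))) _ _ (fun i => rfl)
    rw [this, ← two_mul]
    have : (2 : ZMod 2) = 0 := by decide
    rw [this, zero_mul]
  rw [hsum2] at hsum
  have : ((2 * k + 1 : ℕ) : ZMod 2) = 1 := by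
    simp [Nat.cast_add, Nat.cast_mul]
    exact Or.inl (by decide)
  rw [this] at hsum
  exact one_ne_zero hsum.symm
end

section
/- Any two non-directable orientations of an (ordered) even cycle are push equivalent. -/
/-!
Identify `Bool` with `𝔽₂` (`xor` is addition). Pushing by `s` adds the coboundary
`i ↦ s i + s (i + 1)` to an orientation, and on a cycle the coboundaries are exactly the
functions of total sum zero: a potential is given by partial sums. The all-forward and the
all-backward orientation of an even cycle both have total sum zero, so a non-directable
orientation has total sum one. Two of them therefore differ by a function of total sum zero,
which is a coboundary.
-/

open Finset

theorem Fin.exists_add_one_sub_eq_of_sum_eq_zero {G : Type*} [AddCommGroup G] {n : ℕ} [NeZero n]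
    {f : Fin n → G} (hf : ∑ i, f i = 0) : ∃ s : Fin n → G, ∀ i, s (i + 1) - s i = f i := by
  obtain ⟨m, rfl⟩ := Nat.exists_eq_succ_of_ne_zero (NeZero.ne n)
  refine ⟨fun i => Fin.partialSum f i.castSucc, fun i => i.lastCases ?_ fun j => ?_⟩
  · have hlast : Fin.partialSum f (Fin.last m).succ = 0 := by
      rw [Fin.succ_last, Fin.partialSum, List.take_of_length_le (by simp), List.sum_ofFn, hf]
    rw [Fin.partialSum_succ, add_eq_zero_iff_neg_eq] at hlast
    simpa [Fin.last_add_one] using hlast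
  · simp only [Fin.coeSucc_eq_succ, ← Fin.succ_castSucc, Fin.partialSum_succ, add_sub_cancel_left]

theorem Bool.xor_xor_add_one_eq_add {n : ℕ} [NeZero n] {s f : Fin n → Bool}
    (hs : ∀ i, s (i + 1) - s i = f i) (o : Fin n → Bool) (i : Fin n) :
    Bool.xor (o i) (Bool.xor (s i) (s (i + 1))) = o i + f i := by
  rw [← hs i, Bool.sub_eq_xor, Bool.xor_comm (s (i + 1))]
  rfl

theorem sum_eq_true_of_not_directable {n : ℕ} [NeZero n] {o : Fin n → Bool}
    (h : ¬ ∃ s : Fin n → Bool,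
        (∀ i, Bool.xor (o i) (Bool.xor (s i) (s (i + 1))) = true) ∨
        (∀ i, Bool.xor (o i) (Bool.xor (s i) (s (i + 1))) = false)) :
    ∑ i, o i = true := by
  by_contra hsum
  obtain ⟨s, hs⟩ := Fin.exists_add_one_sub_eq_of_sum_eq_zero (Bool.not_eq_true _ ▸ hsum)
  exact h ⟨s, .inr fun i => by rw [Bool.xor_xor_add_one_eq_add hs, BooleanRing.add_self]; rfl⟩

theorem stmt8_general (n : ℕ) [NeZero n] (o₁ o₂ : Fin n → Bool)
    (h₁ : ¬ ∃ s : Fin n → Bool,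
        (∀ i, Bool.xor (o₁ i) (Bool.xor (s i) (s (i + 1))) = true) ∨
        (∀ i, Bool.xor (o₁ i) (Bool.xor (s i) (s (i + 1))) = false))
    (h₂ : ¬ ∃ s : Fin n → Bool,
        (∀ i, Bool.xor (o₂ i) (Bool.xor (s i) (s (i + 1))) = true) ∨
        (∀ i, Bool.xor (o₂ i) (Bool.xor (s i) (s (i + 1))) = false)) :
    ∃ s : Fin n → Bool, ∀ i, Bool.xor (o₁ i) (Bool.xor (s i) (s (i + 1))) = o₂ i := by
  have hsum : ∑ i, (o₁ i + o₂ i) = 0 := by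
    rw [sum_add_distrib, sum_eq_true_of_not_directable h₁, sum_eq_true_of_not_directable h₂]
    rfl
  obtain ⟨s, hs⟩ := Fin.exists_add_one_sub_eq_of_sum_eq_zero hsum
  exact ⟨s, fun i => by rw [Bool.xor_xor_add_one_eq_add hs, ← add_assoc, BooleanRing.add_self, zero_add]⟩

/-- An orientation of the ordered even cycle `v₀v₁⋯v_{n-1}v₀` (`n` even) is encoded by
`o : Fin n → Bool`: `o i = true` iff the arc between `vᵢ` and `vᵢ₊₁` is the forward arc
`vᵢ → vᵢ₊₁`. Pushing the set `{vᵢ | s i = true}` changes bit `i` by `xor (s i) (s (i+1))`.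
Any two non-directable orientations of an even cycle are push equivalent. -/
theorem stmt8 (n : ℕ) [NeZero n] (hn : Even n) (o₁ o₂ : Fin n → Bool)
    (h₁ : ¬ ∃ s : Fin n → Bool,
        (∀ i, Bool.xor (o₁ i) (Bool.xor (s i) (s (i + 1))) = true) ∨
        (∀ i, Bool.xor (o₁ i) (Bool.xor (s i) (s (i + 1))) = false))
    (h₂ : ¬ ∃ s : Fin n → Bool,
        (∀ i, Bool.xor (o₂ i) (Bool.xor (s i) (s (i + 1))) = true) ∨
        (∀ i, Bool.xor (o₂ i) (Bool.xor (s i) (s (i + 1))) = false)) :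
    ∃ s : Fin n → Bool, ∀ i, Bool.xor (o₁ i) (Bool.xor (s i) (s (i + 1))) = o₂ i :=
  stmt8_general n o₁ o₂ h₁ h₂
end

section
/- Two orientations G⃗₁ and G⃗₂ of a graph G are push equivalent if and only if every ordered cycle of G has the same directability type in G⃗₁ and G⃗₂ (i.e., in each ordered cycle, the parity of the number of forward arcs is the same in both orientations). -/
/-!
Pass to the difference `F u v = o₂ u v - o₁ u v` of the two orientations in `ZMod 2`; it is
antisymmetric on edges. Pushing a set with indicator `σ` flips exactly the arcs `uv` with
`σ u ≠ σ v`, so push equivalence says that `F` is a coboundary `F u v = σ v - σ u`, while the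
cycle condition says that `F` sums to zero along every cycle. Coboundaries telescope to zero
on closed walks. Conversely, the sum of `F` along a walk equals its sum along the bypass of
the walk, since every loop cut off is a cycle or a backtrack along one edge; hence `F`
vanishes on closed walks, and summing `F` along walks from a root of each component gives `σ`.
-/

open SimpleGraph

namespace SimpleGraph.Walk

section AddCommMonoid

variable {V A : Type*} [AddCommMonoid A] {G : SimpleGraph V} (F : V → V → A)

def dartSum {u v : V} (p : G.Walk u v) : A :=
  (p.darts.map fun d => F d.fst d.snd).sum

@[simp]
lemma dartSum_nil {u : V} : (nil : G.Walk u u).dartSum F = 0 := rfl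

@[simp]
lemma dartSum_cons {u v w : V} (h : G.Adj u v) (p : G.Walk v w) :
    (cons h p).dartSum F = F u v + p.dartSum F := by
  simp [dartSum]

@[simp]
lemma dartSum_append {u v w : V} (p : G.Walk u v) (q : G.Walk v w) :
    (p.append q).dartSum F = p.dartSum F + q.dartSum F := by
  simp [dartSum]

@[simp]
lemma dartSum_copy {u v u' v' : V} (p : G.Walk u v) (hu : u = u') (hv : v = v') :
    (p.copy hu hv).dartSum F = p.dartSum F := by
  simp [dartSum]

end AddCommMonoid

section AddCommGroup

variable {V A : Type*} [AddCommGroup A] {G : SimpleGraph V} {F : V → V → A}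

lemma dartSum_sub (F' : V → V → A) {u v : V} (p : G.Walk u v) :
    (p.dartSum fun a b => F a b - F' a b) = p.dartSum F - p.dartSum F' := by
  induction p with
  | nil => simp
  | cons h p ih => simp only [dartSum_cons, ih]; abel

lemma dartSum_reverse (hF : ∀ u v, G.Adj u v → F v u = -F u v) {u v : V} (p : G.Walk u v) :
    p.reverse.dartSum F = -p.dartSum F := by
  induction p with
  | nil => simp
  | cons h p ih => simp [ih, hF _ _ h, add_comm]

lemma dartSum_eq_sub_of_forall_adj {σ : V → A} (hσ : ∀ u v, G.Adj u v → F u v = σ v - σ u)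
    {u v : V} (p : G.Walk u v) : p.dartSum F = σ v - σ u := by
  induction p with
  | nil => simp
  | cons h p ih => rw [dartSum_cons, ih, hσ _ _ h]; abel

section CycleSums

variable (hF : ∀ u v, G.Adj u v → F v u = -F u v)
  (hcyc : ∀ u (c : G.Walk u u), c.IsCycle → c.dartSum F = 0)
include hF hcyc

lemma dartSum_cons_eq_zero_of_isPath {u v : V} (h : G.Adj u v) {p : G.Walk v u}
    (hp : p.IsPath) : (cons h p).dartSum F = 0 := by
  by_cases he : s(u, v) ∈ p.edges
  · -- then `p` is the single edge back from `v` to `u`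
    rw [hp.eq_adj_toWalk_of_mem_edges (Sym2.eq_swap ▸ he)]
    simp [hF u v h]
  · exact hcyc u _ ((cons_isCycle_iff p h).2 ⟨hp, he⟩)

lemma dartSum_bypass [DecidableEq V] {u v : V} (p : G.Walk u v) :
    p.bypass.dartSum F = p.dartSum F := by
  induction p with
  | nil => rfl
  | @cons u v w h p ih =>
    rw [bypass]
    split_ifs with hu
    · have hsplit := congrArg (dartSum F) (p.bypass.take_spec hu)
      have hloop := dartSum_cons_eq_zero_of_isPath hF hcyc h
        ((bypass_isPath p).takeUntil hu)
      rw [dartSum_append] at hsplit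
      rw [dartSum_cons] at hloop
      rw [dartSum_cons, ← ih, ← hsplit, ← add_assoc, hloop, zero_add]
    · rw [dartSum_cons, dartSum_cons, ih]

lemma dartSum_eq_zero_of_forall_isCycle {u : V} (p : G.Walk u u) : p.dartSum F = 0 := by
  classical
  rw [← dartSum_bypass hF hcyc, (isPath_iff_nil.1 (bypass_isPath p)).eq_nil, dartSum_nil]

end CycleSums

end AddCommGroup

end SimpleGraph.Walk

namespace SimpleGraph

open Walk

variable {V A : Type*} [AddCommGroup A] {G : SimpleGraph V} {F : V → V → A}

lemma exists_potential_of_forall_closed (hF : ∀ u v, G.Adj u v → F v u = -F u v)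
    (hclosed : ∀ u (c : G.Walk u u), c.dartSum F = 0) :
    ∃ σ : V → A, ∀ u v, G.Adj u v → F u v = σ v - σ u := by
  let root : V → V := fun v => (G.connectedComponentMk v).out
  have reach : ∀ v, G.Reachable (root v) v := fun v => ConnectedComponent.exact (Quot.out_eq _)
  refine ⟨fun v => (reach v).some.dartSum F, fun u v huv => ?_⟩
  have hroot : root u = root v :=
    congrArg Quot.out (ConnectedComponent.sound huv.reachable)
  have hloop := hclosed _ (((reach u).some.copy hroot rfl).append
    (cons huv (reach v).some.reverse))
  rw [dartSum_append, dartSum_copy, dartSum_cons, dartSum_reverse hF] at hloop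
  rw [← sub_eq_zero, ← hloop]
  abel

theorem exists_potential_iff_forall_isCycle (hF : ∀ u v, G.Adj u v → F v u = -F u v) :
    (∃ σ : V → A, ∀ u v, G.Adj u v → F u v = σ v - σ u) ↔
      ∀ u (c : G.Walk u u), c.IsCycle → c.dartSum F = 0 :=
  ⟨fun ⟨_, hσ⟩ _ c _ => by rw [dartSum_eq_sub_of_forall_adj hσ, sub_self],
    fun hcyc => exists_potential_of_forall_closed hF
      fun _ c => dartSum_eq_zero_of_forall_isCycle hF hcyc c⟩

end SimpleGraph

lemma List.natCast_length_filter_eq_sum {α R : Type*} [AddCommMonoidWithOne R] (l : List α)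
    (p : α → Bool) : ((l.filter p).length : R) = (l.map fun x => ((p x).toNat : R)).sum := by
  induction l with
  | nil => simp
  | cons a l ih => cases h : p a <;> simp [h, ih, add_comm]

lemma exists_bool_iff_exists_zmod_two {V : Type*} (P : (V → ZMod 2) → Prop) :
    (∃ s : V → Bool, P fun v => ((s v).toNat : ZMod 2)) ↔ ∃ σ : V → ZMod 2, P σ := by
  refine ⟨fun ⟨s, hs⟩ => ⟨_, hs⟩, fun ⟨σ, hσ⟩ => ⟨fun v => decide (σ v = 1), ?_⟩⟩
  have hval : ∀ z : ZMod 2, ((decide (z = 1)).toNat : ZMod 2) = z := by decide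
  simpa only [hval] using hσ

/-- Two orientations of a graph `G` (encoded by `o : V → V → Bool`, where on adjacent
pairs `o u v = true` means the arc is directed `u → v`) are push equivalent iff every
ordered cycle of `G` has the same directability type in both, i.e. the number of
forward arcs along the cycle has the same parity in both orientations. -/
theorem stmt9 {V : Type*} (G : SimpleGraph V) (o₁ o₂ : V → V → Bool)
    (h₁ : ∀ u v, G.Adj u v → o₁ u v = !o₁ v u)
    (h₂ : ∀ u v, G.Adj u v → o₂ u v = !o₂ v u) :
    (∃ s : V → Bool, ∀ u v, G.Adj u v →
        Bool.xor (o₁ u v) (Bool.xor (s u) (s v)) = o₂ u v)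
    ↔ ∀ (v : V) (w : G.Walk v v), w.IsCycle →
        (w.darts.filter fun d => o₁ d.toProd.1 d.toProd.2).length
          ≡ (w.darts.filter fun d => o₂ d.toProd.1 d.toProd.2).length [MOD 2] := by
  let F : V → V → ZMod 2 := fun u v => ((o₂ u v).toNat : ZMod 2) - (o₁ u v).toNat
  have hF : ∀ u v, G.Adj u v → F v u = -F u v := by
    intro u v huv
    simp only [F, h₁ u v huv, h₂ u v huv]
    generalize o₁ v u = a; generalize o₂ v u = b; revert a b; decide
  have hpush : ∀ a b x y : Bool, xor a (xor x y) = b ↔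
      ((b.toNat : ZMod 2) - a.toNat = y.toNat - x.toNat) := by decide
  have hcount : ∀ {v : V} (w : G.Walk v v),
      ((w.darts.filter fun d => o₁ d.toProd.1 d.toProd.2).length
        ≡ (w.darts.filter fun d => o₂ d.toProd.1 d.toProd.2).length [MOD 2]) ↔
        w.dartSum F = 0 := by
    intro v w
    rw [← ZMod.natCast_eq_natCast_iff, Walk.dartSum_sub, Walk.dartSum, Walk.dartSum,
      List.natCast_length_filter_eq_sum, List.natCast_length_filter_eq_sum, sub_eq_zero, eq_comm]
  refine Iff.trans ?_ ((exists_bool_iff_exists_zmod_two _).trans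
    ((exists_potential_iff_forall_isCycle hF).trans ?_))
  · simp only [Bool.xor, hpush, F]
  · exact forall₂_congr fun v w => imp_congr_right fun _ => (hcount w).symm
end

section
/- Let G be a graph with n vertices, m edges, and c connected components. Then the number of orientations of G up to push equivalence is exactly 2^{m−n+c}. -/
/-!
Fix a reference orientation `o₀`. An orientation `o` is determined by the edge function
`uv ↦ o u v + o₀ u v` in `Bool ^ E` (the additive group structure on `Bool` is `xor`), and
pushing the vertex set with indicator `s` adds the coboundary `δ s : uv ↦ s u + s v`. Hence the
push classes are the cosets of the image of `δ : Bool ^ V → Bool ^ E`. The kernel of `δ`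
consists of the functions constant on connected components, so it has `2 ^ c` elements, the
image has `2 ^ (n - c)`, and there are `2 ^ m / 2 ^ (n - c)` cosets.
-/

open Function

theorem Nat.eq_pow_sub_of_mul_pow_eq {b q n k : ℕ} (hb : 1 < b) (h : q * b ^ n = b ^ k) :
    q = b ^ (k - n) := by
  have hnk : n ≤ k := (Nat.pow_dvd_pow_iff_le_right hb).1 ⟨q, by rw [← h, mul_comm]⟩
  apply Nat.eq_of_mul_eq_mul_right (Nat.pow_pos (by omega : 0 < b))
  rw [h, ← pow_add, Nat.sub_add_cancel hnk]

theorem Nat.card_quot_eq_card_quotient {X A : Type*} [AddCommGroup A] {H : AddSubgroup A}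
    {r : X → X → Prop} (φ : X → A) (hφ : Surjective φ)
    (hr : ∀ x y, r x y ↔ φ y - φ x ∈ H) :
    Nat.card (Quot r) = Nat.card (A ⧸ H) := by
  let f : X → A ⧸ H := fun x => φ x
  have hf : Surjective f := QuotientAddGroup.mk_surjective.comp hφ
  refine Nat.card_congr ((Quot.congrRight fun x y => ?_).trans
    (Setoid.quotientKerEquivOfSurjective f hf))
  rw [hr, Setoid.ker_def, QuotientAddGroup.eq, neg_add_eq_sub]

namespace SimpleGraph

variable {V : Type*}

theorem Reachable.apply_eq_of_forall_adj {G : SimpleGraph V} {α : Type*} {f : V → α}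
    (hf : ∀ u v, G.Adj u v → f u = f v) {u v : V} (h : G.Reachable u v) : f u = f v := by
  rw [reachable_iff_reflTransGen] at h
  induction h with
  | refl => rfl
  | tail _ hadj ih => exact ih.trans (hf _ _ hadj)

variable (G : SimpleGraph V)

def componentFunEquiv (α : Type*) :
    (G.ConnectedComponent → α) ≃ {f : V → α // ∀ u v, G.Adj u v → f u = f v} where
  toFun g := ⟨g ∘ G.connectedComponentMk,
    fun _ _ h => congrArg g (ConnectedComponent.sound h.reachable)⟩
  invFun f := Quot.lift f.1 fun _ _ h => h.apply_eq_of_forall_adj f.2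
  left_inv g := funext fun c => by induction c using ConnectedComponent.ind; rfl
  right_inv _ := rfl

noncomputable def edgeLift {α : Type*} (f : V → V → α) (e : G.edgeSet) : α :=
  f e.1.out.1 e.1.out.2

theorem edgeLift_mk {α : Type*} {f : V → V → α} (hf : ∀ u v, G.Adj u v → f u v = f v u)
    {u v : V} (h : s(u, v) ∈ G.edgeSet) : G.edgeLift f ⟨s(u, v), h⟩ = f u v := by
  have hout : s((s(u, v)).out.1, (s(u, v)).out.2) = s(u, v) := Quot.out_eq _
  rcases Sym2.eq_iff.1 hout with ⟨h₁, h₂⟩ | ⟨h₁, h₂⟩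
  · simp only [edgeLift, h₁, h₂]
  · simp only [edgeLift, h₁, h₂]
    exact hf v u (G.mem_edgeSet.1 h).symm

noncomputable def coboundary : (V → Bool) →+ (G.edgeSet → Bool) :=
  AddMonoidHom.mk' (fun s => G.edgeLift fun u v => s u + s v)
    fun _ _ => funext fun _ => add_add_add_comm ..

theorem coboundary_mk (s : V → Bool) {u v : V} (h : s(u, v) ∈ G.edgeSet) :
    G.coboundary s ⟨s(u, v), h⟩ = s u + s v :=
  G.edgeLift_mk (fun u v _ => add_comm (s u) (s v)) h

theorem mem_ker_coboundary {s : V → Bool} :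
    s ∈ G.coboundary.ker ↔ ∀ u v, G.Adj u v → s u = s v := by
  simp only [AddMonoidHom.mem_ker, funext_iff, Subtype.forall, Sym2.forall, mem_edgeSet,
    coboundary_mk, Pi.zero_apply]
  exact forall₂_congr fun u v => imp_congr_right fun _ => sub_eq_zero

theorem card_ker_coboundary [Finite V] :
    Nat.card G.coboundary.ker = 2 ^ Nat.card G.ConnectedComponent := by
  rw [Nat.card_congr ((Equiv.subtypeEquivRight fun _ => G.mem_ker_coboundary).trans
      (G.componentFunEquiv Bool).symm),
    Nat.card_fun, Nat.card_eq_fintype_card, Fintype.card_bool]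

abbrev Orientation := {o : V → V → Bool // ∀ u v, G.Adj u v → o u v = !o v u}

def PushRel (o₁ o₂ : G.Orientation) : Prop :=
  ∃ s : V → Bool, ∀ u v, G.Adj u v → o₁.1 u v + (s u + s v) = o₂.1 u v

instance : Nonempty G.Orientation := by
  let := IsWellOrder.linearOrder (WellOrderingRel (α := V))
  refine ⟨⟨fun u v => decide (u < v), fun u v h => ?_⟩⟩
  rcases h.ne.lt_or_gt with huv | huv <;> simp [huv, huv.not_gt]

noncomputable def orientationDiff (o₀ o : G.Orientation) : G.edgeSet → Bool :=
  G.edgeLift fun u v => o.1 u v + o₀.1 u v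

theorem orientationDiff_mk (o₀ o : G.Orientation) {u v : V} (h : s(u, v) ∈ G.edgeSet) :
    G.orientationDiff o₀ o ⟨s(u, v), h⟩ = o.1 u v + o₀.1 u v :=
  G.edgeLift_mk (fun u v huv => by
    rw [o.2 u v huv, o₀.2 u v huv]
    cases o.1 v u <;> cases o₀.1 v u <;> rfl) h

theorem orientationDiff_surjective (o₀ : G.Orientation) :
    Surjective (G.orientationDiff o₀) := by
  classical
  intro g
  refine ⟨⟨fun u v => if h : G.Adj u v then g ⟨s(u, v), h⟩ + o₀.1 u v else false,
    fun u v h => ?_⟩, funext fun ⟨e, he⟩ => ?_⟩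
  · simp only [dif_pos h, dif_pos h.symm, Sym2.eq_swap, o₀.2 u v h]
    generalize g _ = b
    cases b <;> cases o₀.1 v u <;> rfl
  · induction e using Sym2.ind with
    | _ u v =>
      rw [orientationDiff_mk]
      dsimp only
      rw [dif_pos (G.mem_edgeSet.1 he), add_assoc, BooleanRing.add_self, add_zero]

theorem pushRel_iff (o₀ o₁ o₂ : G.Orientation) :
    G.PushRel o₁ o₂ ↔
      G.orientationDiff o₀ o₂ - G.orientationDiff o₀ o₁ ∈ G.coboundary.range := by
  constructor
  · rintro ⟨s, hs⟩
    refine ⟨s, funext fun ⟨e, he⟩ => ?_⟩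
    induction e using Sym2.ind with
    | _ u v =>
      rw [coboundary_mk, Pi.sub_apply, orientationDiff_mk, orientationDiff_mk, ← hs u v he]
      abel
  · rintro ⟨s, hs⟩
    refine ⟨s, fun u v h => ?_⟩
    have := congrFun hs ⟨s(u, v), G.mem_edgeSet.2 h⟩
    rw [coboundary_mk, Pi.sub_apply, orientationDiff_mk, orientationDiff_mk] at this
    rw [this]
    abel

theorem card_quot_pushRel_mul [Fintype V] [DecidableRel G.Adj] :
    Nat.card (Quot G.PushRel) * 2 ^ Fintype.card V =
      2 ^ (G.edgeFinset.card + Nat.card G.ConnectedComponent) := by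
  obtain ⟨o₀⟩ : Nonempty G.Orientation := inferInstance
  have hquot : Nat.card (Quot G.PushRel) = G.coboundary.range.index :=
    Nat.card_quot_eq_card_quotient _ (G.orientationDiff_surjective o₀) (G.pushRel_iff o₀)
  have hrange := G.coboundary.range.card_mul_index
  have hker := G.coboundary.ker.card_mul_index
  rw [AddSubgroup.index_ker, card_ker_coboundary] at hker
  simp only [Nat.card_fun, Nat.card_eq_fintype_card (α := Bool), Fintype.card_bool,
    Nat.card_eq_fintype_card (α := V), Nat.card_eq_fintype_card (α := G.edgeSet)]
    at hrange hker
  rw [hquot, ← hker, pow_add, edgeFinset_card, ← hrange]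
  ring

end SimpleGraph

theorem stmt10_general {V : Type*} [Fintype V]
    (G : SimpleGraph V) [DecidableRel G.Adj] :
    Nat.card (Quot (fun (o₁ o₂ : {o : V → V → Bool // ∀ u v, G.Adj u v → o u v = !o v u}) =>
        ∃ s : V → Bool, ∀ u v, G.Adj u v →
          Bool.xor (o₁.1 u v) (Bool.xor (s u) (s v)) = o₂.1 u v))
      = 2 ^ (G.edgeFinset.card + Nat.card G.ConnectedComponent - Fintype.card V) :=
  Nat.eq_pow_sub_of_mul_pow_eq one_lt_two G.card_quot_pushRel_mul

/-- The number of orientations of a graph `G` (with `n` vertices, `m` edges and `c`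
connected components), counted up to push equivalence, is `2 ^ (m - n + c)`.
Orientations are encoded as `o : V → V → Bool` with `o u v = !o v u` on adjacent pairs
(`o u v = true` meaning the arc is directed `u → v`); two orientations are identified
when one is obtained from the other by pushing some vertex set. -/
theorem stmt10 {V : Type*} [Fintype V] [DecidableEq V]
    (G : SimpleGraph V) [DecidableRel G.Adj] :
    Nat.card (Quot (fun (o₁ o₂ : {o : V → V → Bool // ∀ u v, G.Adj u v → o u v = !o v u}) =>
        ∃ s : V → Bool, ∀ u v, G.Adj u v →
          Bool.xor (o₁.1 u v) (Bool.xor (s u) (s v)) = o₂.1 u v))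
      = 2 ^ (G.edgeFinset.card + Nat.card G.ConnectedComponent - Fintype.card V) :=
  stmt10_general G
end

section
/- Let (G,σ) be a signed bipartite graph with bipartition A ∪ B and let G⃗ be its associated oriented graph (positive edges oriented from A to B, negative edges oriented from B to A). Similarly let H⃗ be the associated oriented graph of a signed bipartite graph (H,τ). Then a vertex map f is a pushable homomorphism of G⃗ to H⃗ if and only if f is a switchable homomorphism of (G,σ) to (H,τ). -/
/-- The associated oriented graph of a signed bipartite graph `(G, σ)` with bipartition
given by `p : V → Bool` (`p v = false` meaning `v ∈ A`, `p v = true` meaning `v ∈ B`):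
a positive edge `uv` (`u ∈ A`, `v ∈ B`) becomes the arc `u → v` and a negative edge
becomes the arc `v → u`. Signs are encoded by `σ : V → V → Bool` (`true` = positive). -/
def assocArc {V : Type*} (G : SimpleGraph V) (p : V → Bool) (σ : V → V → Bool)
    (u v : V) : Prop :=
  G.Adj u v ∧ ((p u = false ∧ p v = true ∧ σ u v = true) ∨
               (p u = true ∧ p v = false ∧ σ u v = false))

private lemma stmt12.F1 : ∀ a b g su sv qu qv t : Bool,
    ((a = false ∧ b = true ∧ g = true) ∨ (a = true ∧ b = false ∧ g = false)) →
    Bool.xor su sv = false →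
    ((qu = false ∧ qv = true ∧ t = true) ∨ (qu = true ∧ qv = false ∧ t = false)) →
    Bool.xor g (Bool.xor (Bool.xor su (a && !qu)) (Bool.xor sv (b && !qv))) = t := by decide

private lemma stmt12.F2 : ∀ a b g su sv qu qv t : Bool,
    ((a = false ∧ b = true ∧ g = true) ∨ (a = true ∧ b = false ∧ g = false)) →
    Bool.xor su sv = true →
    ((qv = false ∧ qu = true ∧ t = true) ∨ (qv = true ∧ qu = false ∧ t = false)) →
    Bool.xor g (Bool.xor (Bool.xor su (a && !qu)) (Bool.xor sv (b && !qv))) = t := by decide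

private lemma stmt12.F3 : ∀ a b g su sv qu qv t : Bool,
    ((b = false ∧ a = true ∧ g = true) ∨ (b = true ∧ a = false ∧ g = false)) →
    Bool.xor su sv = false →
    ((qv = false ∧ qu = true ∧ t = true) ∨ (qv = true ∧ qu = false ∧ t = false)) →
    Bool.xor g (Bool.xor (Bool.xor su (a && !qu)) (Bool.xor sv (b && !qv))) = t := by decide

private lemma stmt12.F4 : ∀ a b g su sv qu qv t : Bool,
    ((b = false ∧ a = true ∧ g = true) ∨ (b = true ∧ a = false ∧ g = false)) →
    Bool.xor su sv = true →
    ((qu = false ∧ qv = true ∧ t = true) ∨ (qu = true ∧ qv = false ∧ t = false)) →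
    Bool.xor g (Bool.xor (Bool.xor su (a && !qu)) (Bool.xor sv (b && !qv))) = t := by decide

private lemma stmt12.B1 : ∀ a b g su sv qu qv t : Bool,
    Bool.xor (Bool.xor su (a && !qu)) (Bool.xor sv (b && !qv)) = false →
    ((a = false ∧ b = true ∧ g = true) ∨ (a = true ∧ b = false ∧ g = false)) →
    Bool.xor g (Bool.xor su sv) = t → ¬ (qu = qv) →
    ((qu = false ∧ qv = true ∧ t = true) ∨ (qu = true ∧ qv = false ∧ t = false)) := by decide

private lemma stmt12.B2 : ∀ a b g su sv qu qv t : Bool,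
    Bool.xor (Bool.xor su (a && !qu)) (Bool.xor sv (b && !qv)) = true →
    ((b = false ∧ a = true ∧ g = true) ∨ (b = true ∧ a = false ∧ g = false)) →
    Bool.xor g (Bool.xor su sv) = t → ¬ (qu = qv) →
    ((qu = false ∧ qv = true ∧ t = true) ∨ (qu = true ∧ qv = false ∧ t = false)) := by decide

/-- A vertex map `f` is a pushable homomorphism of the associated oriented graph of
`(G, σ)` to the associated oriented graph of `(H, τ)` iff `f` is a switchable
homomorphism of `(G, σ)` to `(H, τ)`. -/
theorem stmt12 {V W : Type*} (G : SimpleGraph V) (H : SimpleGraph W)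
    (pA : V → Bool) (qA : W → Bool)
    (hG : ∀ u v, G.Adj u v → pA u ≠ pA v)
    (hH : ∀ u v, H.Adj u v → qA u ≠ qA v)
    (σ : V → V → Bool) (τ : W → W → Bool)
    (hσ : ∀ u v, σ u v = σ v u) (hτ : ∀ u v, τ u v = τ v u)
    (f : V → W) :
    -- f is a pushable homomorphism of the associated oriented graphs
    (∃ s : V → Bool, ∀ u v,
        ((Bool.xor (s u) (s v) = false ∧ assocArc G pA σ u v) ∨
         (Bool.xor (s u) (s v) = true ∧ assocArc G pA σ v u)) →
        assocArc H qA τ (f u) (f v))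
    ↔ -- f is a switchable homomorphism of the signed graphs
    (∃ s : V → Bool, ∀ u v, G.Adj u v →
        H.Adj (f u) (f v) ∧
        Bool.xor (σ u v) (Bool.xor (s u) (s v)) = τ (f u) (f v)) := by
  constructor
  · rintro ⟨s, hs⟩
    refine ⟨fun u => Bool.xor (s u) (pA u && !(qA (f u))), fun u v huv => ?_⟩
    have hpp := hG u v huv
    have harc : assocArc G pA σ u v ∨ assocArc G pA σ v u := by
      cases hpu : pA u <;> cases hpv : pA v <;> cases hg : σ u v
      · exact absurd (hpu.trans hpv.symm) hpp
      · exact absurd (hpu.trans hpv.symm) hpp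
      · exact Or.inr ⟨huv.symm, Or.inr ⟨hpv, hpu, (hσ u v).symm.trans hg⟩⟩
      · exact Or.inl ⟨huv, Or.inl ⟨hpu, hpv, hg⟩⟩
      · exact Or.inl ⟨huv, Or.inr ⟨hpu, hpv, hg⟩⟩
      · exact Or.inr ⟨huv.symm, Or.inl ⟨hpv, hpu, (hσ u v).symm.trans hg⟩⟩
      · exact absurd (hpu.trans hpv.symm) hpp
      · exact absurd (hpu.trans hpv.symm) hpp
    rcases harc with harc | harc
    · by_cases hd : Bool.xor (s u) (s v) = false
      · have A := hs u v (Or.inl ⟨hd, harc⟩)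
        exact ⟨A.1, stmt12.F1 (pA u) (pA v) (σ u v) (s u) (s v) (qA (f u)) (qA (f v))
          (τ (f u) (f v)) harc.2 hd A.2⟩
      · have hd' : Bool.xor (s u) (s v) = true := by
          cases h' : Bool.xor (s u) (s v)
          · exact absurd h' hd
          · rfl
        have hd2 : Bool.xor (s v) (s u) = true := by rw [Bool.xor_comm]; exact hd'
        have A := hs v u (Or.inr ⟨hd2, harc⟩)
        obtain ⟨hA1, hA2⟩ := A
        rw [hτ (f v) (f u)] at hA2
        exact ⟨hA1.symm, stmt12.F2 (pA u) (pA v) (σ u v) (s u) (s v) (qA (f u)) (qA (f v))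
          (τ (f u) (f v)) harc.2 hd' hA2⟩
    · have hgv := harc.2
      rw [← hσ u v] at hgv
      by_cases hd : Bool.xor (s u) (s v) = false
      · have hd2 : Bool.xor (s v) (s u) = false := by rw [Bool.xor_comm]; exact hd
        have A := hs v u (Or.inl ⟨hd2, harc⟩)
        obtain ⟨hA1, hA2⟩ := A
        rw [hτ (f v) (f u)] at hA2
        exact ⟨hA1.symm, stmt12.F3 (pA u) (pA v) (σ u v) (s u) (s v) (qA (f u)) (qA (f v))
          (τ (f u) (f v)) hgv hd hA2⟩
      · have hd' : Bool.xor (s u) (s v) = true := by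
          cases h' : Bool.xor (s u) (s v)
          · exact absurd h' hd
          · rfl
        have A := hs u v (Or.inr ⟨hd', harc⟩)
        exact ⟨A.1, stmt12.F4 (pA u) (pA v) (σ u v) (s u) (s v) (qA (f u)) (qA (f v))
          (τ (f u) (f v)) hgv hd' A.2⟩
  · rintro ⟨s, hs⟩
    refine ⟨fun u => Bool.xor (s u) (pA u && !(qA (f u))), fun u v h => ?_⟩
    rcases h with ⟨hd, harc⟩ | ⟨hd, harc⟩
    · obtain ⟨hH1, heq⟩ := hs u v harc.1
      have hq := hH _ _ hH1
      exact ⟨hH1, stmt12.B1 (pA u) (pA v) (σ u v) (s u) (s v) (qA (f u)) (qA (f v))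
        (τ (f u) (f v)) hd harc.2 heq hq⟩
    · have hgv := harc.2
      rw [← hσ u v] at hgv
      obtain ⟨hH1, heq⟩ := hs u v harc.1.symm
      have hq := hH _ _ hH1
      exact ⟨hH1, stmt12.B2 (pA u) (pA v) (σ u v) (s u) (s v) (qA (f u)) (qA (f v))
        (τ (f u) (f v)) hd hgv heq hq⟩
end

section
/- Let P⃗ be an oriented path of length 4k from u to v in which the number of forward arcs (with respect to traversal from u to v) is even. Consider maps to the directed cycle C⃗_{2k+1} with vertices {0,…,2k} and arcs i → i+1 (mod 2k+1). For any color i assigned to u and any color j ∈ {0,…,2k}, there is a pushable homomorphism of P⃗ to C⃗_{2k+1} sending u to i and v to j (i.e., a push of some subset of internal vertices of P⃗ followed by a homomorphism achieving these images). -/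
/-- Let `P⃗` be an oriented path of length `4k` from `u = v₀` to `v = v_{4k}`, the direction
of the arc between `vₑ` and `vₑ₊₁` encoded by `o e` (`true` = forward), with an even number
of forward arcs. Then for any colors `i, j` in the directed cycle `C⃗_{2k+1} = ZMod (2k+1)`
there is a pushable homomorphism of `P⃗` to `C⃗_{2k+1}` (a push of a subset of internal
vertices followed by a homomorphism, i.e. a coloring increasing by 1 along each arc of the
pushed orientation) sending `u` to `i` and `v` to `j`. -/
theorem stmt14 (k : ℕ) (hk : 1 ≤ k) (o : Fin (4 * k) → Bool)
    (ho : Even (Finset.univ.filter fun e : Fin (4 * k) => o e = true).card) :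
    ∀ i j : ZMod (2 * k + 1),
      ∃ (s : Fin (4 * k + 1) → Bool) (c : Fin (4 * k + 1) → ZMod (2 * k + 1)),
        s 0 = false ∧ s (Fin.last (4 * k)) = false ∧
        c 0 = i ∧ c (Fin.last (4 * k)) = j ∧
        ∀ e : Fin (4 * k),
          c e.succ = c e.castSucc +
            (if Bool.xor (o e) (Bool.xor (s e.castSucc) (s e.succ)) then 1 else -1) := by
  intro i j
  haveI : NeZero (2 * k + 1) := ⟨by omega⟩
  have hcop : Nat.Coprime 4 (2 * k + 1) := by
    have h2 : Nat.Coprime 2 (2 * k + 1) := Nat.coprime_two_left.mpr ⟨k, by ring⟩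
    simpa using h2.pow_left 2
  -- choose r with 2r ≤ 4k and 4r ≡ j - i + 4k
  obtain ⟨r, hr1, hr2⟩ : ∃ r : ℕ, 2 * r ≤ 4 * k ∧
      ((4 * r : ℕ) : ZMod (2 * k + 1)) = j - i + 4 * k := by
    set u := ZMod.unitOfCoprime 4 hcop with hu
    set x : ZMod (2 * k + 1) := j - i + 4 * (k : ZMod (2 * k + 1)) with hx
    refine ⟨((↑u⁻¹ : ZMod (2 * k + 1)) * x).val, ?_, ?_⟩
    · have := ZMod.val_lt ((↑u⁻¹ : ZMod (2 * k + 1)) * x); omega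
    · push_cast
      rw [ZMod.natCast_val, ZMod.cast_id]
      have h4 : (4 : ZMod (2 * k + 1)) = (u : ZMod (2 * k + 1)) := by
        simp [hu, ZMod.coe_unitOfCoprime]
      rw [h4, Units.mul_inv_cancel_left]
  -- the pushed orientation difference
  set D : ℕ → Bool := fun e =>
    if h : e < 4 * k then xor (o ⟨e, h⟩) (decide (e < 2 * r)) else false with hD
  set s : Fin (4 * k + 1) → Bool := fun v =>
    decide ((∑ e ∈ Finset.range v.val, (if D e then (1 : ZMod 2) else 0)) = 1) with hs
  set ε : ℕ → ZMod (2 * k + 1) := fun e => if e < 2 * r then 1 else -1 with hε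
  set c : Fin (4 * k + 1) → ZMod (2 * k + 1) :=
    fun v => i + ∑ e ∈ Finset.range v.val, ε e with hc
  have hfilter : ((Finset.range (4 * k)).filter (fun e => e < 2 * r)).card = 2 * r := by
    rw [show (Finset.range (4 * k)).filter (fun e => e < 2 * r) = Finset.range (2 * r) by
      ext x; simp; omega]
    simp
  have hsum2 : (∑ e ∈ Finset.range (4 * k), (if D e then (1 : ZMod 2) else 0)) = 0 := by
    have hsplit : ∀ e ∈ Finset.range (4 * k), (if D e then (1 : ZMod 2) else 0) =
        (if h : e < 4 * k then (if o ⟨e, h⟩ then (1 : ZMod 2) else 0) else 0) +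
        (if e < 2 * r then (1 : ZMod 2) else 0) := by
      intro e he
      simp only [Finset.mem_range] at he
      simp only [hD, dif_pos he]
      by_cases hb : e < 2 * r <;> cases ha : o ⟨e, he⟩ <;> simp [hb] <;> decide
    rw [Finset.sum_congr rfl hsplit, Finset.sum_add_distrib]
    have h1 : (∑ e ∈ Finset.range (4 * k),
        (if h : e < 4 * k then (if o ⟨e, h⟩ then (1 : ZMod 2) else 0) else 0)) = 0 := by
      rw [← Fin.sum_univ_eq_sum_range]
      have : ∀ x : Fin (4 * k),
          (if h : (x : ℕ) < 4 * k then (if o ⟨x, h⟩ then (1 : ZMod 2) else 0) else 0)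
          = (if o x then (1 : ZMod 2) else 0) := by
        intro x; rw [dif_pos x.isLt]
      rw [Finset.sum_congr rfl fun x _ => this x, Finset.sum_boole]
      obtain ⟨m, hm⟩ := ho
      rw [hm]
      exact (ZMod.natCast_eq_zero_iff _ 2).mpr ⟨m, by ring⟩
    have h2 : (∑ e ∈ Finset.range (4 * k), (if e < 2 * r then (1 : ZMod 2) else 0)) = 0 := by
      rw [Finset.sum_boole, hfilter]
      exact (ZMod.natCast_eq_zero_iff _ 2).mpr ⟨r, rfl⟩
    rw [h1, h2, add_zero]
  have hsumε : (∑ e ∈ Finset.range (4 * k), ε e) = j - i := by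
    have hsplit : ∀ e ∈ Finset.range (4 * k), ε e =
        (if e < 2 * r then (1 : ZMod (2 * k + 1)) else 0) * 2 - 1 := by
      intro e _
      by_cases hb : e < 2 * r <;> simp [hε, hb] <;> norm_num
    rw [Finset.sum_congr rfl hsplit, Finset.sum_sub_distrib, ← Finset.sum_mul,
      Finset.sum_boole, hfilter, Finset.sum_const, Finset.card_range, nsmul_eq_mul, mul_one]
    have h4 : ((4 * r : ℕ) : ZMod (2 * k + 1)) = j - i + 4 * k := hr2
    push_cast at h4 ⊢
    linear_combination h4
  refine ⟨s, c, ?_, ?_, ?_, ?_, ?_⟩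
  · simp [hs]
  · simp only [hs, Fin.val_last]
    exact decide_eq_false (by rw [hsum2]; decide)
  · simp [hc]
  · simp only [hc, Fin.val_last]
    rw [hsumε]; ring
  · intro e
    have hse : Bool.xor (s e.castSucc) (s e.succ) = D e.val := by
      simp only [hs, Fin.coe_castSucc, Fin.val_succ, Finset.sum_range_succ]
      cases hDe : D e.val
      · simp
      · simp only [if_true]
        have key : ∀ S : ZMod 2, (decide (S = 1) ^^ decide (S + 1 = 1)) = true := by decide
        exact key _
    have hDe : D e.val = xor (o e) (decide (e.val < 2 * r)) := by
      simp only [hD, dif_pos e.isLt, Fin.eta]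
    rw [hse, hDe]
    have hx : Bool.xor (o e) (xor (o e) (decide (e.val < 2 * r))) = decide (e.val < 2 * r) := by
      cases o e <;> simp
    rw [hx]
    simp only [hc, Fin.val_succ, Fin.coe_castSucc, Finset.sum_range_succ, hε,
      decide_eq_true_eq]
    by_cases hb : e.val < 2 * r <;> simp [hb] <;> ring
end

section
/- Let P⃗′ be an oriented path of length 4k from u to v in which the number of forward arcs (with respect to traversal from u to v) is odd. Then for any assignment of colors i to u and j to v from the directed cycle C⃗_{2k+1} (vertices 0,…,2k, arcs i → i+1 mod 2k+1), there exists a pushable homomorphism of P⃗′ to C⃗_{2k+1} sending u to i and v to j if and only if i ≠ j. -/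
open Finset

lemma tele15 {R : Type*} [AddCommGroup R] (n : ℕ) (c : Fin (n+1) → R) :
    ∑ e : Fin n, (c e.succ - c e.castSucc) = c (Fin.last n) - c 0 := by
  induction n with
  | zero => simp
  | succ n ih =>
    rw [Fin.sum_univ_castSucc]
    have h := ih (fun e => c e.castSucc)
    simp only [Fin.succ_castSucc] at h ⊢
    rw [h]
    simp [Fin.succ_last]

lemma sum_pm15 {R : Type*} [Ring R] (n : ℕ) (f : Fin n → Bool) :
    ∑ e : Fin n, (if f e then (1:R) else -1)
      = 2 * ((univ.filter fun e => f e = true).card : R) - n := by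
  have h : ∀ e : Fin n, (if f e then (1:R) else -1)
      = 2 * (if f e = true then (1:R) else 0) - 1 := by
    intro e; cases hfe : f e <;> simp [hfe] <;> norm_num
  simp_rw [h]
  rw [Finset.sum_sub_distrib, ← Finset.mul_sum, Finset.sum_boole, Finset.sum_const,
    card_univ, Fintype.card_fin, nsmul_eq_mul, mul_one]

lemma card_xor15 (n : ℕ) (a b : Fin n → Bool) :
    (((univ.filter fun e => Bool.xor (a e) (b e) = true).card : ZMod 2))
      = ((univ.filter fun e => a e = true).card : ZMod 2)
        + ((univ.filter fun e => b e = true).card : ZMod 2) := by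
  rw [← Finset.sum_boole, ← Finset.sum_boole, ← Finset.sum_boole, ← Finset.sum_add_distrib]
  refine Finset.sum_congr rfl fun e _ => ?_
  cases a e <;> cases b e <;> decide

lemma odd_iff_cast15 (n : ℕ) : (n : ZMod 2) = 1 ↔ Odd n := by
  rw [show (1 : ZMod 2) = ((1:ℕ) : ZMod 2) from rfl, ZMod.natCast_eq_natCast_iff,
    Nat.ModEq, Nat.odd_iff]

lemma cancel2_15 (k : ℕ) (x y : ZMod (2*k+1)) (h : 2 * x = 2 * y) : x = y := by
  have h0 : ((2*k+1 : ℕ) : ZMod (2*k+1)) = 0 := ZMod.natCast_self _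
  push_cast at h0
  linear_combination ((k : ZMod (2*k+1)) + 1) * h - (x - y) * h0

lemma card_lt15 (n p : ℕ) (hp : p ≤ n) :
    (univ.filter fun e : Fin n => e.val < p).card = p := by
  rw [Finset.card_filter]
  rw [Fin.sum_univ_eq_sum_range (fun i => if i < p then 1 else 0) n]
  rw [← Finset.card_filter]
  rw [show (Finset.range n).filter (fun i => i < p) = Finset.range p from by
    ext x; simp; omega]
  exact Finset.card_range p

/-- auxiliary indicator sequence -/
def T15 (k p : ℕ) (o : Fin (4*k) → Bool) (a : ℕ) : ZMod 2 :=
  if h : a < 4*k then (if Bool.xor (o ⟨a, h⟩) (decide (a < p)) then 1 else 0) else 0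

lemma xor_decide15 (S : ZMod 2) (b : Bool) :
    Bool.xor (decide (S = 1)) (decide ((S + if b = true then (1:ZMod 2) else 0) = 1)) = b := by
  revert S b; decide

lemma T15_val (k p : ℕ) (o : Fin (4*k) → Bool) (e : Fin (4*k)) :
    T15 k p o e.val = if Bool.xor (o e) (decide (e.val < p)) = true then (1:ZMod 2) else 0 := by
  simp only [T15, e.isLt, dif_pos, Fin.eta]

/-- Let `P⃗′` be an oriented path of length `4k` from `u = v₀` to `v = v_{4k}`, the direction
of the arc between `vₑ` and `vₑ₊₁` encoded by `o e` (`true` = forward), with an odd number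
of forward arcs. Then for colors `i, j` in the directed cycle `C⃗_{2k+1} = ZMod (2k+1)`,
there is a pushable homomorphism of `P⃗′` to `C⃗_{2k+1}` (a push of a subset of internal
vertices followed by a homomorphism, i.e. a coloring increasing by 1 along each arc of the
pushed orientation) sending `u` to `i` and `v` to `j` if and only if `i ≠ j`. -/
theorem stmt15 (k : ℕ) (hk : 1 ≤ k) (o : Fin (4 * k) → Bool)
    (ho : Odd (Finset.univ.filter fun e : Fin (4 * k) => o e = true).card) :
    ∀ i j : ZMod (2 * k + 1),
      (∃ (s : Fin (4 * k + 1) → Bool) (c : Fin (4 * k + 1) → ZMod (2 * k + 1)),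
        s 0 = false ∧ s (Fin.last (4 * k)) = false ∧
        c 0 = i ∧ c (Fin.last (4 * k)) = j ∧
        ∀ e : Fin (4 * k),
          c e.succ = c e.castSucc +
            (if Bool.xor (o e) (Bool.xor (s e.castSucc) (s e.succ)) then 1 else -1))
      ↔ i ≠ j := by
  intro i j
  constructor
  · rintro ⟨s, c, hs0, hsl, hc0, hcl, hstep⟩ hij
    set f : Fin (4*k) → Bool :=
      fun e => Bool.xor (o e) (Bool.xor (s e.castSucc) (s e.succ)) with hf
    set p := (univ.filter fun e => f e = true).card with hp
    -- the sum identity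
    have hsum : j - i = 2 * (p : ZMod (2*k+1)) - ((4*k : ℕ) : ZMod (2*k+1)) := by
      calc j - i = c (Fin.last (4*k)) - c 0 := by rw [hc0, hcl]
        _ = ∑ e : Fin (4*k), (c e.succ - c e.castSucc) := (tele15 _ _).symm
        _ = ∑ e : Fin (4*k), (if f e then 1 else -1) := by
              refine Finset.sum_congr rfl fun e _ => ?_
              rw [hstep e]; ring
        _ = _ := by rw [sum_pm15]
    -- parity of p
    have hpar : (p : ZMod 2) = 1 := by
      have h1 := card_xor15 (4*k) o (fun e => Bool.xor (s e.castSucc) (s e.succ))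
      have h2 : (((univ.filter fun e : Fin (4*k) =>
          Bool.xor (s e.castSucc) (s e.succ) = true).card : ZMod 2)) = 0 := by
        rw [← Finset.sum_boole]
        have h3 : ∀ e : Fin (4*k),
            (if Bool.xor (s e.castSucc) (s e.succ) = true then (1:ZMod 2) else 0)
            = (if s e.succ = true then (1:ZMod 2) else 0)
              - (if s e.castSucc = true then (1:ZMod 2) else 0) := by
          intro e
          cases s e.castSucc <;> cases s e.succ <;> decide
        have h4 : ∑ e : Fin (4*k), ((if s e.succ = true then (1:ZMod 2) else 0)
              - (if s e.castSucc = true then (1:ZMod 2) else 0))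
            = (if s (Fin.last (4*k)) = true then (1:ZMod 2) else 0)
              - (if s 0 = true then (1:ZMod 2) else 0) :=
          tele15 (4*k) (fun v => if s v = true then (1:ZMod 2) else 0)
        rw [Finset.sum_congr rfl (fun e _ => h3 e), h4, hs0, hsl]
        simp
      rw [hp, hf, h1, h2, add_zero, odd_iff_cast15]
      exact ho
    have hop : Odd p := (odd_iff_cast15 p).mp hpar
    -- from i = j, derive p ≡ 2k
    have h2p : (2 : ZMod (2*k+1)) * (p : ZMod (2*k+1)) = 2 * ((2*k : ℕ) : ZMod (2*k+1)) := by
      rw [hij] at hsum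
      push_cast at hsum ⊢
      linear_combination -hsum
    have hpz := cancel2_15 k _ _ h2p
    have hmod : p % (2*k+1) = (2*k) % (2*k+1) :=
      (ZMod.natCast_eq_natCast_iff _ _ _).mp hpz
    have hmod2 : p % (2*k+1) = 2*k := by rw [hmod, Nat.mod_eq_of_lt (by omega)]
    have hple : p ≤ 4*k := le_trans (Finset.card_filter_le _ _) (by simp)
    obtain ⟨m, hm⟩ := hop
    rcases Nat.lt_or_ge p (2*k+1) with hlt | hge
    · rw [Nat.mod_eq_of_lt hlt] at hmod2; omega
    · have hsub : p % (2*k+1) = (p - (2*k+1)) % (2*k+1) := by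
        conv_lhs => rw [show p = (p - (2*k+1)) + (2*k+1) by omega]
        rw [Nat.add_mod_right]
      rw [hsub] at hmod2
      have h5 := Nat.mod_le (p - (2*k+1)) (2*k+1)
      omega
  · intro hij
    have hd : j - i ≠ 0 := sub_ne_zero.mpr (Ne.symm hij)
    haveI : NeZero (2*k+1) := ⟨by omega⟩
    set x : ZMod (2*k+1) := (j - i - 2) * ((k : ZMod (2*k+1)) + 1) with hx
    set r := x.val with hr
    have hrlt : r < 2*k+1 := ZMod.val_lt x
    have h0 : ((2*k+1 : ℕ) : ZMod (2*k+1)) = 0 := ZMod.natCast_self _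
    push_cast at h0
    have h2x : 2 * x = j - i - 2 := by
      rw [hx]; linear_combination (j - i - 2) * h0
    have hxr : ((r : ℕ) : ZMod (2*k+1)) = x := by
      rw [hr, ZMod.natCast_val, ZMod.cast_id]
    have hrne : r ≠ 2*k := by
      intro h
      apply hd
      have hA : j - i - 2 = 2 * ((2*k : ℕ) : ZMod (2*k+1)) := by
        rw [← h2x, ← hxr, h]
      push_cast at hA
      linear_combination hA + 2 * h0
    set p := if r % 2 = 1 then r else r + (2*k+1) with hpdef
    have hpodd : Odd p := by
      rw [hpdef]; split_ifs with h
      · exact Nat.odd_iff.mpr h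
      · rw [Nat.odd_iff]; omega
    have hple : p ≤ 4*k := by rw [hpdef]; split_ifs <;> omega
    have hpx : ((p : ℕ) : ZMod (2*k+1)) = x := by
      rw [hpdef]; split_ifs with h
      · exact hxr
      · push_cast
        push_cast at hxr
        linear_combination hxr + h0
    -- the construction
    refine ⟨fun v => decide ((∑ e ∈ Finset.range v.val, T15 k p o e) = 1),
      fun v => i + 2 * ((min v.val p : ℕ) : ZMod (2*k+1)) - ((v.val : ℕ) : ZMod (2*k+1)),
      ?_, ?_, ?_, ?_, ?_⟩
    · simp
    · have hsum0 : (∑ e ∈ Finset.range (4*k), T15 k p o e) = 0 := by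
        rw [← Fin.sum_univ_eq_sum_range]
        rw [Finset.sum_congr rfl (fun e _ => T15_val k p o e)]
        rw [Finset.sum_boole]
        rw [card_xor15 (4*k) o (fun e => decide (e.val < p))]
        rw [show (univ.filter fun e : Fin (4*k) => decide (e.val < p) = true)
            = univ.filter fun e : Fin (4*k) => e.val < p from by simp]
        rw [card_lt15 (4*k) p hple]
        rw [(odd_iff_cast15 _).mpr ho, (odd_iff_cast15 _).mpr hpodd]
        decide
      simp only [Fin.val_last, hsum0]
      decide
    · simp
    · simp only [Fin.val_last]
      rw [min_eq_right hple, hpx]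
      push_cast
      linear_combination h2x - 2 * h0
    · intro e
      have hsx : Bool.xor
          (decide ((∑ a ∈ Finset.range (e.castSucc).val, T15 k p o a) = 1))
          (decide ((∑ a ∈ Finset.range (e.succ).val, T15 k p o a) = 1))
          = Bool.xor (o e) (decide (e.val < p)) := by
        simp only [Fin.coe_castSucc, Fin.val_succ]
        simp only [Finset.sum_range_succ, T15_val]
        exact xor_decide15 _ _
      simp only [hsx]
      have hxx : Bool.xor (o e) (Bool.xor (o e) (decide (e.val < p)))
          = decide (e.val < p) := by
        cases o e <;> cases decide (e.val < p) <;> rfl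
      rw [hxx]
      simp only [Fin.coe_castSucc, Fin.val_succ]
      by_cases hcase : e.val < p
      · rw [if_pos (by simpa using hcase), min_eq_left (by omega), min_eq_left (by omega)]
        push_cast
        ring
      · rw [if_neg (by simpa using hcase), min_eq_right (by omega), min_eq_right (by omega)]
        push_cast
        ring
end

section
/- For any k ≥ 1 and any simple graph G, the oriented graph G⃗^{(k)} (obtained by replacing each edge uv of G by two internally disjoint oriented paths of length 4k from u to v, one with an even number of forward arcs and one with an odd number of forward arcs) admits a pushable homomorphism to the directed cycle C⃗_{2k+1} if and only if G is properly (2k+1)-colorable. -/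
/-- Internal vertices of the gadget `G⃗⁽ᵏ⁾`: for each edge of `G` (recorded as an ordered
pair `(u, v)` with `u < v`) and each of the two replacement paths (`Bool`), there are
`4k - 1` internal vertices. -/
def GadgetVertex (k : ℕ) {V : Type*} [LinearOrder V] (G : SimpleGraph V) : Type _ :=
  V ⊕ ({p : V × V // G.Adj p.1 p.2 ∧ p.1 < p.2} × Bool × Fin (4 * k - 1))

/-- The arcs of the gadget `G⃗⁽ᵏ⁾`: each edge `uv` of `G` is replaced by two internally
disjoint oriented paths of length `4k` from `u` to `v`. The path indexed `false` has all
`4k` arcs forward (an even number of forward arcs); the path indexed `true` has its first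
arc backward and the remaining `4k - 1` arcs forward (an odd number of forward arcs). -/
def GadgetArc (k : ℕ) {V : Type*} [LinearOrder V] (G : SimpleGraph V) :
    GadgetVertex k G → GadgetVertex k G → Prop
  | Sum.inl u, Sum.inr ⟨e, b, t⟩ => (t : ℕ) = 0 ∧ u = e.1.1 ∧ b = false
  | Sum.inr ⟨e, b, t⟩, Sum.inl u =>
      ((t : ℕ) = 0 ∧ u = e.1.1 ∧ b = true) ∨ ((t : ℕ) = 4 * k - 2 ∧ u = e.1.2)
  | Sum.inr ⟨e, b, t⟩, Sum.inr ⟨e', b', t'⟩ => e = e' ∧ b = b' ∧ (t' : ℕ) = (t : ℕ) + 1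
  | Sum.inl _, Sum.inl _ => False

/-!
Along any oriented walk, a pushable homomorphism `f` to `C⃗_n` with pushed set `s` moves by
`d * σ(x) * σ(y)` across each step `x — y`, where `d = ±1` is the direction of the arc and
`σ = ±1` records the side of the push. Over a walk of length `4k` the increments are `4k` signs
summing to `4k - 2m`, where `m` counts the `-1`s; this vanishes modulo `2k + 1` only for `m = 2k`,
and then the product of the increments, which telescopes to `(∏ d) σ(u) σ(v)`, is `1`. The two
paths of an edge have `∏ d = 1` and `∏ d = -1`, so `f u ≠ f v`.

Conversely, given a colouring `c`, every residue `t = c v - c u` is `4k - 2m` for some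
`m ∈ [0, 2k]`, and `m + 2k + 1 ≤ 4k` gives the same residue with the other parity of `m` unless
`t = 0`. So on both paths the increments can be chosen with sum `t` and the product that the
directions force.
-/

open Finset

/-- `f` is a homomorphism to the directed cycle `C⃗_n` from the orientation obtained from `A` by
pushing the set `{x | s x}`: an arc is reversed iff exactly one of its ends is pushed. -/
def IsPushableHom {α : Type*} {n : ℕ} (A : α → α → Prop) (s : α → Bool) (f : α → ZMod n) :
    Prop :=
  ∀ x y, ((s x = s y ∧ A x y) ∨ (s x ≠ s y ∧ A y x)) → f y = f x + 1

def sideSign (b : Bool) : ℤ := if b then -1 else 1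

lemma isUnit_sideSign (b : Bool) : IsUnit (sideSign b) := by
  cases b <;> simp [sideSign]

lemma sideSign_mul_sideSign (a b : Bool) :
    sideSign a * sideSign b = if a = b then 1 else -1 := by
  cases a <;> cases b <;> rfl

lemma sideSign_decide_eq_neg_one {z : ℤ} (hz : IsUnit z) : sideSign (decide (z = -1)) = z := by
  rcases Int.isUnit_iff.1 hz with rfl | rfl <;> rfl

def IsOrientedWalk {α : Type*} (A : α → α → Prop) (x : ℕ → α) (d : ℕ → ℤ) (N : ℕ) : Prop :=
  ∀ q < N, (d q = 1 ∧ A (x q) (x (q + 1))) ∨ (d q = -1 ∧ A (x (q + 1)) (x q))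

lemma IsOrientedWalk.isUnit {α : Type*} {A : α → α → Prop} {x : ℕ → α} {d : ℕ → ℤ} {N : ℕ}
    (hw : IsOrientedWalk A x d N) {q : ℕ} (hq : q < N) : IsUnit (d q) := by
  rcases hw q hq with ⟨h, -⟩ | ⟨h, -⟩ <;> simp [h]

/-- The sides `S` and values `F` that a pushable homomorphism induces along an oriented walk with
directions `d`. -/
def IsSignedLabelling {R : Type*} [AddGroupWithOne R] (d : ℕ → ℤ) (N : ℕ) (S : ℕ → Bool)
    (F : ℕ → R) : Prop :=
  ∀ q < N, F (q + 1) = F q + (d q * sideSign (S q) * sideSign (S (q + 1)) : ℤ)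

lemma eq_add_sum_of_succ_eq {R : Type*} [AddCommGroupWithOne R] {F : ℕ → R} {δ : ℕ → ℤ}
    {N : ℕ} (h : ∀ q < N, F (q + 1) = F q + δ q) :
    F N = F 0 + ((∑ q ∈ range N, δ q : ℤ) : R) := by
  induction N with
  | zero => simp
  | succ N ih =>
    rw [h N N.lt_succ_self, ih fun q hq => h q (by omega), sum_range_succ]
    push_cast
    abel

lemma prod_range_mul_mul_succ {d τ : ℕ → ℤ} (hτ : ∀ q, τ q * τ q = 1) (N : ℕ) :
    ∏ q ∈ range N, d q * τ q * τ (q + 1) = (∏ q ∈ range N, d q) * τ 0 * τ N := by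
  induction N with
  | zero => simp [hτ]
  | succ N ih =>
    rw [prod_range_succ, prod_range_succ, ih]
    linear_combination (∏ q ∈ range N, d q) * d N * τ 0 * τ (N + 1) * hτ N

lemma exists_sum_range_eq_and_prod_range_eq {δ : ℕ → ℤ} {N : ℕ}
    (hδ : ∀ q < N, IsUnit (δ q)) :
    ∃ m ≤ N, ∑ q ∈ range N, δ q = N - 2 * m ∧ ∏ q ∈ range N, δ q = (-1) ^ m := by
  induction N with
  | zero => exact ⟨0, le_rfl, by simp, by simp⟩
  | succ N ih =>
    obtain ⟨m, hm, hsum, hprod⟩ := ih fun q hq => hδ q (by omega)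
    rw [sum_range_succ, prod_range_succ, hsum, hprod]
    rcases Int.isUnit_iff.1 (hδ N N.lt_succ_self) with h | h
    · exact ⟨m, by omega, by rw [h]; push_cast; ring, by rw [h, mul_one]⟩
    · exact ⟨m + 1, by omega, by rw [h]; push_cast; ring, by rw [h, pow_succ]⟩

lemma sum_range_ite_lt {m N : ℕ} (hm : m ≤ N) :
    ∑ i ∈ range N, (if i < m then (-1 : ℤ) else 1) = N - 2 * m := by
  induction N, hm using Nat.le_induction with
  | base =>
    rw [sum_congr rfl fun i hi => if_pos (mem_range.1 hi)]
    simp only [sum_const, card_range, smul_neg, nsmul_eq_mul, mul_one]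
    ring
  | succ N hmN ih =>
    rw [sum_range_succ, ih, if_neg (by omega)]
    push_cast
    ring

lemma prod_range_ite_lt {m N : ℕ} (hm : m ≤ N) :
    ∏ i ∈ range N, (if i < m then (-1 : ℤ) else 1) = (-1) ^ m := by
  induction N, hm using Nat.le_induction with
  | base =>
    rw [prod_congr rfl fun i hi => if_pos (mem_range.1 hi)]
    simp
  | succ N hmN ih => rw [prod_range_succ, ih, if_neg (by omega), mul_one]

lemma eq_two_mul_of_intCast_sub_two_mul_eq_zero {k m : ℕ} (hm : m ≤ 4 * k)
    (h : (((4 * k : ℕ) - 2 * m : ℤ) : ZMod (2 * k + 1)) = 0) : m = 2 * k := by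
  obtain ⟨t, ht⟩ := (ZMod.intCast_zmod_eq_zero_iff_dvd _ _).1 h
  push_cast at ht
  have ht₁ : t < 2 := by nlinarith
  have ht₂ : -2 < t := by nlinarith
  interval_cases t <;> omega

theorem IsSignedLabelling.prod_mul_sideSign_eq_one {k : ℕ} {d : ℕ → ℤ} {S : ℕ → Bool}
    {F : ℕ → ZMod (2 * k + 1)} (hl : IsSignedLabelling d (4 * k) S F)
    (hd : ∀ q < 4 * k, IsUnit (d q)) (heq : F 0 = F (4 * k)) :
    (∏ q ∈ range (4 * k), d q) * sideSign (S 0) * sideSign (S (4 * k)) = 1 := by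
  obtain ⟨m, hm, hsum, hprod⟩ := exists_sum_range_eq_and_prod_range_eq fun q hq =>
    ((hd q hq).mul (isUnit_sideSign (S q))).mul (isUnit_sideSign (S (q + 1)))
  have hF := eq_add_sum_of_succ_eq hl
  rw [hsum, ← heq, left_eq_add] at hF
  rw [← prod_range_mul_mul_succ fun q => Int.isUnit_mul_self (isUnit_sideSign (S q)), hprod,
    eq_two_mul_of_intCast_sub_two_mul_eq_zero hm hF, pow_mul]
  norm_num

/-- Take `m` descending steps, then ascending ones, and choose the sides so that each step has
the prescribed sign. -/
lemma exists_isSignedLabelling {R : Type*} [AddCommGroupWithOne R] {d : ℕ → ℤ} {N m : ℕ}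
    (hd : ∀ q < N, IsUnit (d q)) (hm : m ≤ N) (hprod : ∏ q ∈ range N, d q = (-1) ^ m) (a : R) :
    ∃ (S : ℕ → Bool) (F : ℕ → R), S 0 = false ∧ S N = false ∧ F 0 = a ∧
      F N = a + ((N - 2 * m : ℤ) : R) ∧ IsSignedLabelling d N S F := by
  set δ : ℕ → ℤ := fun i => if i < m then -1 else 1
  set τ : ℕ → ℤ := fun q => ∏ i ∈ range q, d i * δ i
  have hδ : ∀ i, IsUnit (δ i) := fun i => by by_cases h : i < m <;> simp [δ, h]
  have hτ : ∀ q ≤ N, IsUnit (τ q) := fun q hq =>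
    IsUnit.prod_iff.2 fun i hi => (hd i (by simp at hi; omega)).mul (hδ i)
  refine ⟨fun q => decide (τ q = -1), fun q => a + ((∑ i ∈ range q, δ i : ℤ) : R),
    by simp [τ], ?_, by simp, by simp only [δ, sum_range_ite_lt hm], fun q hq => ?_⟩
  · have hτN : τ N = 1 := by
      simp only [τ, prod_mul_distrib, hprod, δ, prod_range_ite_lt hm, ← mul_pow]
      norm_num
    simp [hτN]
  · simp only [sideSign_decide_eq_neg_one (hτ q hq.le), sideSign_decide_eq_neg_one (hτ (q + 1) hq),
      sum_range_succ]
    have hτ_succ : τ (q + 1) = τ q * (d q * δ q) := prod_range_succ _ _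
    have hincr : d q * τ q * τ (q + 1) = δ q := by
      rw [hτ_succ]
      linear_combination δ q * d q * d q * Int.isUnit_mul_self (hτ q hq.le) +
        δ q * Int.isUnit_mul_self (hd q hq)
    rw [hincr]
    push_cast
    abel

lemma exists_sub_two_mul_eq_and_neg_one_pow_eq {k : ℕ} (t : ZMod (2 * k + 1)) (b : Bool)
    (ht : b = true → t ≠ 0) :
    ∃ m ≤ 4 * k, (((4 * k : ℕ) - 2 * m : ℤ) : ZMod (2 * k + 1)) = t ∧
      (-1 : ℤ) ^ m = sideSign b := by
  have h0 : ((2 * k + 1 : ℕ) : ZMod (2 * k + 1)) = 0 := ZMod.natCast_self _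
  push_cast at h0
  -- `k + 1` inverts `2` modulo `2k + 1`.
  set m₀ := ((k + 1) * (4 * k - t) : ZMod (2 * k + 1)).val with hm₀_def
  have hm₀ : m₀ < 2 * k + 1 := ZMod.val_lt _
  have hcast : (((4 * k : ℕ) - 2 * m₀ : ℤ) : ZMod (2 * k + 1)) = t := by
    push_cast
    rw [hm₀_def, ZMod.natCast_val, ZMod.cast_id]
    linear_combination (-(4 * (k : ZMod (2 * k + 1)) - t)) * h0
  by_cases hpar : (-1 : ℤ) ^ m₀ = sideSign b
  · exact ⟨m₀, by omega, hcast, hpar⟩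
  have hm₀_ne : m₀ ≠ 2 * k := by
    rintro hm
    have hb : b = true := by
      cases b
      · simp [hm, pow_mul, sideSign] at hpar
      · rfl
    refine ht hb ?_
    rw [← hcast, hm]
    push_cast
    ring
  refine ⟨m₀ + (2 * k + 1), by omega, ?_, ?_⟩
  · push_cast at hcast ⊢
    linear_combination hcast - 2 * h0
  · rw [pow_add, Odd.neg_one_pow (odd_two_mul_add_one k)]
    rcases neg_one_pow_eq_or ℤ m₀ with h | h <;> cases b <;> simp_all [sideSign]

section PushableHom

variable {α : Type*} {n : ℕ} {A : α → α → Prop} {s : α → Bool} {f : α → ZMod n}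

theorem isPushableHom_iff :
    IsPushableHom A s f ↔ ∀ x y, A x y → f y = f x + (sideSign (s x) * sideSign (s y) : ℤ) := by
  refine ⟨fun hf x y hxy => ?_, fun h x y hxy => ?_⟩
  · rw [sideSign_mul_sideSign]
    split_ifs with hs
    · simpa using hf x y (Or.inl ⟨hs, hxy⟩)
    · rw [hf y x (Or.inr ⟨Ne.symm hs, hxy⟩)]
      simp
  · rcases hxy with ⟨hs, hxy⟩ | ⟨hs, hyx⟩
    · simpa [sideSign_mul_sideSign, hs] using h x y hxy
    · rw [h y x hyx, sideSign_mul_sideSign, if_neg (Ne.symm hs)]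
      simp

theorem IsPushableHom.isSignedLabelling (hf : IsPushableHom A s f) {x : ℕ → α} {d : ℕ → ℤ}
    {N : ℕ} (hw : IsOrientedWalk A x d N) :
    IsSignedLabelling d N (fun q => s (x q)) (fun q => f (x q)) := by
  intro q hq
  beta_reduce
  rcases hw q hq with ⟨hd, ha⟩ | ⟨hd, ha⟩
  · rw [isPushableHom_iff.1 hf _ _ ha, hd, one_mul]
  · rw [isPushableHom_iff.1 hf _ _ ha, hd]
    push_cast
    ring

end PushableHom

section Gadget

variable {k : ℕ} {V : Type*} [LinearOrder V] {G : SimpleGraph V}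

abbrev OrderedEdge (G : SimpleGraph V) : Type _ := {p : V × V // G.Adj p.1 p.2 ∧ p.1 < p.2}

/-- The `q`-th vertex (`0 ≤ q ≤ 4k`) of the path `b` replacing the edge `e`. -/
def pathVert (k : ℕ) (G : SimpleGraph V) (e : OrderedEdge G) (b : Bool) (q : ℕ) :
    GadgetVertex k G :=
  if hq : 1 ≤ q ∧ q ≤ 4 * k - 1 then Sum.inr (e, b, ⟨q - 1, by omega⟩)
  else if q = 0 then Sum.inl e.1.1 else Sum.inl e.1.2

def pathDir (b : Bool) (q : ℕ) : ℤ := if q = 0 then sideSign b else 1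

lemma isUnit_pathDir (b : Bool) (q : ℕ) : IsUnit (pathDir b q) := by
  unfold pathDir
  split_ifs
  exacts [isUnit_sideSign b, isUnit_one]

lemma prod_pathDir (hk : 1 ≤ k) (b : Bool) : ∏ q ∈ range (4 * k), pathDir b q = sideSign b := by
  obtain ⟨n, hn⟩ : ∃ n, 4 * k = n + 1 := ⟨4 * k - 1, by omega⟩
  rw [hn, prod_range_succ']
  simp [pathDir]

lemma pathVert_zero (e : OrderedEdge G) (b : Bool) : pathVert k G e b 0 = Sum.inl e.1.1 :=
  (dif_neg (by omega)).trans (if_pos rfl)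

lemma pathVert_four_mul (hk : 1 ≤ k) (e : OrderedEdge G) (b : Bool) :
    pathVert k G e b (4 * k) = Sum.inl e.1.2 :=
  (dif_neg (by omega)).trans (if_neg (by omega))

lemma pathVert_of_pos (e : OrderedEdge G) (b : Bool) {q : ℕ} (h : 1 ≤ q ∧ q ≤ 4 * k - 1) :
    pathVert k G e b q = Sum.inr (e, b, ⟨q - 1, by omega⟩) :=
  dif_pos h

lemma pathVert_succ (e : OrderedEdge G) (b : Bool) (t : Fin (4 * k - 1)) :
    pathVert k G e b (t + 1) = Sum.inr (e, b, t) := by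
  rw [pathVert_of_pos e b ⟨by omega, by omega⟩]
  rfl

lemma sumElim_pathVert {β : Type*} (g : V → β) (h : OrderedEdge G → Bool → ℕ → β)
    (e : OrderedEdge G) (b : Bool) (h₀ : h e b 0 = g e.1.1) (hN : h e b (4 * k) = g e.1.2)
    {q : ℕ} (hq : q ≤ 4 * k) :
    (Sum.elim g (fun p => h p.1 p.2.1 (p.2.2 + 1)) : GadgetVertex k G → β)
      (pathVert k G e b q) = h e b q := by
  rcases Nat.eq_zero_or_pos q with rfl | hq₀
  · rw [pathVert_zero]
    exact h₀.symm
  rcases hq.eq_or_lt with rfl | hq₁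
  · rw [pathVert_four_mul (by omega)]
    exact hN.symm
  rw [pathVert_of_pos e b ⟨hq₀, by omega⟩]
  show h e b (q - 1 + 1) = h e b q
  rw [Nat.sub_add_cancel hq₀]

lemma isOrientedWalk_pathVert (hk : 1 ≤ k) (e : OrderedEdge G) (b : Bool) :
    IsOrientedWalk (GadgetArc k G) (pathVert k G e b) (pathDir b) (4 * k) := by
  intro q hq
  rcases Nat.eq_zero_or_pos q with rfl | hq₀
  · rw [pathVert_zero, pathVert_of_pos e b ⟨le_rfl, by omega⟩]
    cases b
    exacts [Or.inl ⟨rfl, rfl, rfl, rfl⟩, Or.inr ⟨rfl, Or.inl ⟨rfl, rfl, rfl⟩⟩]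
  have hdir : pathDir b q = 1 := if_neg (by omega)
  refine Or.inl ⟨hdir, ?_⟩
  rw [pathVert_of_pos e b ⟨hq₀, by omega⟩]
  rcases eq_or_ne q (4 * k - 1) with rfl | hq₁
  · rw [Nat.sub_add_cancel (by omega), pathVert_four_mul hk]
    exact Or.inr ⟨by simp; omega, rfl⟩
  · rw [pathVert_of_pos e b ⟨by omega, by omega⟩]
    exact ⟨rfl, rfl, by simp; omega⟩

lemma exists_pathVert_of_gadgetArc (hk : 1 ≤ k) {x y : GadgetVertex k G}
    (h : GadgetArc k G x y) :
    ∃ (e : OrderedEdge G) (b : Bool), ∃ q < 4 * k,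
      (pathDir b q = 1 ∧ x = pathVert k G e b q ∧ y = pathVert k G e b (q + 1)) ∨
      (pathDir b q = -1 ∧ x = pathVert k G e b (q + 1) ∧ y = pathVert k G e b q) := by
  rcases x with u | ⟨e, b, t⟩ <;> rcases y with v | ⟨e', b', t'⟩
  · exact h.elim
  · obtain ⟨ht, rfl, rfl⟩ := h
    refine ⟨e', false, 0, by omega, Or.inl ⟨rfl, (pathVert_zero e' false).symm, ?_⟩⟩
    exact (pathVert_succ e' false t').symm.trans (congrArg _ (by omega))
  · rcases h with ⟨ht, rfl, rfl⟩ | ⟨ht, rfl⟩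
    · refine ⟨e, true, 0, by omega, Or.inr ⟨rfl, ?_, (pathVert_zero e true).symm⟩⟩
      exact (pathVert_succ e true t).symm.trans (congrArg _ (by omega))
    · refine ⟨e, b, 4 * k - 1, by omega, Or.inl ⟨if_neg (by omega), ?_, ?_⟩⟩
      · exact (pathVert_succ e b t).symm.trans (congrArg _ (by omega))
      · rw [Nat.sub_add_cancel (by omega), pathVert_four_mul hk]
  · obtain ⟨rfl, rfl, ht⟩ := h
    refine ⟨e, b, t + 1, by omega, Or.inl ⟨if_neg (by omega), (pathVert_succ e b t).symm, ?_⟩⟩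
    exact (pathVert_succ e b t').symm.trans (congrArg _ (by omega))

theorem IsPushableHom.apply_inl_ne (hk : 1 ≤ k) {s : GadgetVertex k G → Bool}
    {f : GadgetVertex k G → ZMod (2 * k + 1)} (hf : IsPushableHom (GadgetArc k G) s f)
    (u v : V) (huv : G.Adj u v) : f (Sum.inl u) ≠ f (Sum.inl v) := by
  wlog hlt : u < v generalizing u v
  · exact (this v u huv.symm (huv.ne.symm.lt_of_le (not_lt.1 hlt))).symm
  intro heq
  have key (b : Bool) :=
    (hf.isSignedLabelling (isOrientedWalk_pathVert hk ⟨(u, v), huv, hlt⟩ b)).prod_mul_sideSign_eq_one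
      (fun q _ => isUnit_pathDir b q) (by rwa [pathVert_zero, pathVert_four_mul hk])
  have keyf := key false
  have keyt := key true
  rw [prod_pathDir hk, pathVert_zero, pathVert_four_mul hk] at keyf keyt
  rw [show sideSign false = 1 from rfl] at keyf
  rw [show sideSign true = -1 from rfl] at keyt
  linarith

theorem exists_isPushableHom_gadgetArc (hk : 1 ≤ k) {c : V → ZMod (2 * k + 1)}
    (hc : ∀ u v, G.Adj u v → c u ≠ c v) :
    ∃ (s : GadgetVertex k G → Bool) (f : GadgetVertex k G → ZMod (2 * k + 1)),
      IsPushableHom (GadgetArc k G) s f := by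
  have hpath (e : OrderedEdge G) (b : Bool) :
      ∃ (S : ℕ → Bool) (F : ℕ → ZMod (2 * k + 1)), S 0 = false ∧ S (4 * k) = false ∧
        F 0 = c e.1.1 ∧ F (4 * k) = c e.1.2 ∧ IsSignedLabelling (pathDir b) (4 * k) S F := by
    obtain ⟨m, hm, hmt, hmb⟩ := exists_sub_two_mul_eq_and_neg_one_pow_eq (c e.1.2 - c e.1.1) b
      fun _ => sub_ne_zero.2 (hc _ _ e.2.1).symm
    obtain ⟨S, F, hS₀, hSN, hF₀, hFN, hl⟩ := exists_isSignedLabelling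
      (fun q _ => isUnit_pathDir b q) hm (by rw [prod_pathDir hk, hmb]) (c e.1.1)
    exact ⟨S, F, hS₀, hSN, hF₀, by rw [hFN, hmt, add_sub_cancel], hl⟩
  choose S F hS₀ hSN hF₀ hFN hl using hpath
  refine ⟨Sum.elim (fun _ => false) (fun p => S p.1 p.2.1 (p.2.2 + 1)),
    Sum.elim c (fun p => F p.1 p.2.1 (p.2.2 + 1)), isPushableHom_iff.2 fun x y hxy => ?_⟩
  obtain ⟨e, b, q, hq, ⟨hd, rfl, rfl⟩ | ⟨hd, rfl, rfl⟩⟩ := exists_pathVert_of_gadgetArc hk hxy <;>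
    simp only [sumElim_pathVert (fun _ => false) S e b (hS₀ e b) (hSN e b),
      sumElim_pathVert c F e b (hF₀ e b) (hFN e b), hq.le, Nat.succ_le_of_lt hq, hl e b q hq, hd]
  · simp
  · push_cast
    ring

end Gadget

/-- For any `k ≥ 1` and any simple graph `G`, the gadget `G⃗⁽ᵏ⁾` admits a pushable
homomorphism to the directed cycle `C⃗_{2k+1}` (vertices `ZMod (2k+1)`, arcs `i → i+1`)
iff `G` is properly `(2k+1)`-colorable. Pushing the set `{x | s x = true}` replaces the
arc between `x` and `y` by its reverse iff exactly one endpoint is in the set. -/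
theorem stmt16 (k : ℕ) (hk : 1 ≤ k) {V : Type*} [LinearOrder V] (G : SimpleGraph V) :
    (∃ (s : GadgetVertex k G → Bool) (f : GadgetVertex k G → ZMod (2 * k + 1)),
        ∀ x y, ((s x = s y ∧ GadgetArc k G x y) ∨ (s x ≠ s y ∧ GadgetArc k G y x)) →
          f y = f x + 1)
    ↔ ∃ c : V → ZMod (2 * k + 1), ∀ u v, G.Adj u v → c u ≠ c v := by
  constructor
  · rintro ⟨s, f, hf⟩
    exact ⟨fun v => f (Sum.inl v), IsPushableHom.apply_inl_ne hk hf⟩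
  · rintro ⟨c, hc⟩
    exact exists_isPushableHom_gadgetArc hk hc
end
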